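/- Let g be a reductive complex Lie algebra with finite-order automorphism θ, and let x = x_s + x_n ∈ g_1 with Jordan decomposition as indicated. Suppose λ : ℂ^× → G_0 is a cocharacter centralising x_s, and let (x_n^0, h, f) be an sl_2-triple with x_n^0 = ^λ_0 x_n (the λ-weight-zero component of x_n), h ∈ Z_{g_0}(x_s) of λ-weight 0, and f of λ-weight 0. Let μ be a cocharacter of Z_{G_0}(x_s) with dμ(1) = h. Then for all integers j, k: [x_s, ^μ_k ^λ_j g_0] ⊆ ^μ_k ^λ_j g_1 and [x_n^0, ^μ_k ^λ_j g_0] ⊆ ^μ_{k+2} ^λ_j g_1, and since x_s is semisimple one has the decomposition ^μ_k ^λ_j g_1 = [x_s, ^μ_k ^λ_j g_0] ⊕ ^μ_k ^λ_j Z_{g_1}(x_s). Consequently, for every n ∈ ℤ, ^λ_{≥n} g_1 = [x, ^λ_{≥n} g_0] + ^λ_{≥n} Z_{g_1}(x_s). -/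

import Mathlib

/-!
All the spaces involved are graded at once by `θ` (eigenvalues the powers of `ζ`), by `ad el`
(the `λ`-weights) and by `ad h` (the `μ`-weights), and the bracket is multiplicative for the first
grading and additive for the other two; this gives the two inclusions. Since `ad xs` is
semisimple, every subspace `W` it preserves splits as `[xs, W] ⊕ (ker (ad xs) ⊓ W)`. Averaging
over the powers of `θ` projects onto its eigenspaces, and `ad xs` shifts the `θ`-grading by `ζ`,
so for a joint `λ`/`μ`-weight space `W` this becomes `g₁ ⊓ W = [xs, g₀ ⊓ W] ⊕ Z_{g₁}(xs) ⊓ W`.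

For the last statement write `x = xs + xn0 + (xn - xn0)`. An element of `g₁` of `λ`-weight `j`
and `μ`-weight `k` is `[xs, u] + z`; trading `[xs, u]` for `[x, u]` costs `[xn0, u]`, of
`μ`-weight `k + 2`, and `[xn - xn0, u]`, of `λ`-weight `> j`. Both weights are bounded above, so
a downward induction on `k` and then on `j` concludes.
-/

open Module Module.End LieAlgebra

section Eigenspaces

variable {K V : Type*} [Field K] [AddCommGroup V] [Module K V] [FiniteDimensional K V]

theorem Submodule.inf_iSup_eigenspace {p : Submodule K V} {f : End K V}
    (hp : ∀ x ∈ p, f x ∈ p) {ι : Sort*} (c : ι → K) :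
    p ⊓ ⨆ i, f.eigenspace (c i) = ⨆ i, p ⊓ f.eigenspace (c i) := by
  refine le_antisymm ?_ (le_inf (iSup_le fun i ↦ inf_le_left) (iSup_mono fun i ↦ inf_le_right))
  rw [← iSup_range (f := c) (g := f.eigenspace),
    ← iSup_range (f := c) (g := fun μ ↦ p ⊓ f.eigenspace μ)]
  set S := Set.range c
  have hall : p ⊓ ⨆ μ ∈ S, f.eigenspace μ ≤ ⨆ μ, p ⊓ f.eigenspace μ :=
    (inf_le_inf_left p (iSup₂_le fun μ _ ↦ le_iSup (f.eigenspace ·) μ)).trans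
      (Submodule.inf_iSup_genEigenspace hp 1).le
  have hdisj : Disjoint (⨆ μ ∈ Sᶜ, f.eigenspace μ) (⨆ μ ∈ S, f.eigenspace μ) :=
    f.eigenspaces_iSupIndep.disjoint_biSup_biSup disjoint_compl_left
  calc p ⊓ ⨆ μ ∈ S, f.eigenspace μ
      ≤ (⨆ μ, p ⊓ f.eigenspace μ) ⊓ ⨆ μ ∈ S, f.eigenspace μ := le_inf hall inf_le_right
    _ = ((⨆ μ ∈ S, p ⊓ f.eigenspace μ) ⊔ ⨆ μ ∈ Sᶜ, p ⊓ f.eigenspace μ) ⊓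
          ⨆ μ ∈ S, f.eigenspace μ := by rw [iSup_split _ (· ∈ S)]; rfl
    _ = (⨆ μ ∈ S, p ⊓ f.eigenspace μ) ⊔
          (⨆ μ ∈ Sᶜ, p ⊓ f.eigenspace μ) ⊓ ⨆ μ ∈ S, f.eigenspace μ :=
        sup_inf_assoc_of_le _ (iSup₂_mono fun μ _ ↦ inf_le_right)
    _ = ⨆ μ ∈ S, p ⊓ f.eigenspace μ := by
        rw [(hdisj.mono_left (iSup₂_mono fun μ _ ↦ inf_le_right)).eq_bot, sup_bot_eq]

theorem Module.End.IsSemisimple.isCompl_range_ker {f : End K V} (hf : f.IsSemisimple) :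
    IsCompl (LinearMap.range f) (LinearMap.ker f) := by
  have hdisj : Disjoint (LinearMap.range f) (LinearMap.ker f) := by
    rw [Submodule.disjoint_def]
    rintro _ ⟨w, rfl⟩ hw
    have hw2 : w ∈ f.genEigenspace 0 (2 : ℕ) := by
      rw [mem_genEigenspace_nat, zero_smul, sub_zero, LinearMap.mem_ker, sq, Module.End.mul_apply]
      exact hw
    rw [hf.isFinitelySemisimple.genEigenspace_eq_eigenspace 0 (by norm_num)] at hw2
    simpa using hw2
  refine ⟨hdisj, codisjoint_iff.mpr (Submodule.eq_top_of_disjoint _ _ ?_ hdisj)⟩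
  rw [LinearMap.finrank_range_add_finrank_ker]

theorem Module.End.IsSemisimple.map_sup_ker_inf {f : End K V} (hf : f.IsSemisimple)
    {W : Submodule K V} (hW : ∀ w ∈ W, f w ∈ W) : W.map f ⊔ LinearMap.ker f ⊓ W = W := by
  refine le_antisymm (sup_le (Submodule.map_le_iff_le_comap.mpr hW) inf_le_right) fun v hv ↦ ?_
  have htop := (hf.restrict (p := W) hW).isCompl_range_ker.sup_eq_top
  have hvW : (⟨v, hv⟩ : W) ∈ LinearMap.range (f.restrict hW) ⊔ LinearMap.ker (f.restrict hW) :=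
    htop ▸ Submodule.mem_top
  obtain ⟨_, ⟨u, rfl⟩, z, hz, hvuz⟩ := Submodule.mem_sup.mp hvW
  refine Submodule.mem_sup.mpr ⟨f u, Submodule.mem_map_of_mem u.2, z, ⟨?_, z.2⟩, ?_⟩
  · simpa [Subtype.ext_iff] using hz
  · simpa [Subtype.ext_iff] using hvuz

end Eigenspaces

namespace Module.End

section WeightFiltration

variable {R M : Type*} [CommRing R] [AddCommGroup M] [Module R M]

def eigenspaceGE (f : End R M) (n : ℤ) : Submodule R M :=
  ⨆ j : {j : ℤ // n ≤ j}, f.eigenspace (j : R)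

theorem eigenspace_le_eigenspaceGE (f : End R M) (n : ℤ) :
    f.eigenspace (n : R) ≤ f.eigenspaceGE n :=
  le_iSup (fun j : {j : ℤ // n ≤ j} ↦ f.eigenspace (j : R)) ⟨n, le_rfl⟩

theorem eigenspaceGE_antitone (f : End R M) : Antitone f.eigenspaceGE :=
  fun _ _ hab ↦ iSup_le fun j ↦ le_iSup (fun j : {j : ℤ // _ ≤ j} ↦ f.eigenspace (j : R))
    ⟨j, hab.trans j.2⟩

end WeightFiltration

section Average

variable {K V : Type*} [Field K] [AddCommGroup V] [Module K V]

noncomputable def eigenAverage (θ : End K V) (m : ℕ) (a : K) : End K V :=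
  (m : K)⁻¹ • ∑ r ∈ Finset.range m, a⁻¹ ^ r • θ ^ r

variable {θ : End K V} {m : ℕ} {a : K}

theorem eigenAverage_apply (v : V) :
    θ.eigenAverage m a v = (m : K)⁻¹ • ∑ r ∈ Finset.range m, a⁻¹ ^ r • (θ ^ r) v := by
  simp [eigenAverage, LinearMap.sum_apply]

theorem mul_eigenAverage (hθ : θ ^ m = 1) (ha : a ^ m = 1) :
    θ * θ.eigenAverage m a = a • θ.eigenAverage m a := by
  rcases Nat.eq_zero_or_pos m with rfl | hm
  · simp [eigenAverage]
  have ha0 : a ≠ 0 := ne_zero_pow hm.ne' (by simp [ha])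
  set t : ℕ → End K V := fun r ↦ a⁻¹ ^ r • θ ^ r
  have hshift (r : ℕ) : θ * t r = a • t (r + 1) := by
    simp only [t, smul_smul, mul_smul_comm, pow_succ', mul_inv_cancel_left₀ ha0]
  have hcycle : ∑ r ∈ Finset.range m, t (r + 1) = ∑ r ∈ Finset.range m, t r := by
    have hperiod : t m = t 0 := by simp [t, hθ, inv_pow, ha]
    have := (Finset.sum_range_succ' t m).symm.trans (Finset.sum_range_succ t m)
    rwa [hperiod, add_left_inj] at this
  calc θ * θ.eigenAverage m a = (m : K)⁻¹ • ∑ r ∈ Finset.range m, θ * t r := by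
        rw [eigenAverage, mul_smul_comm, Finset.mul_sum]
    _ = a • θ.eigenAverage m a := by
        simp only [hshift, ← Finset.smul_sum, hcycle]; rw [smul_comm]; rfl

theorem eigenAverage_apply_mem (hθ : θ ^ m = 1) (ha : a ^ m = 1) (v : V) :
    θ.eigenAverage m a v ∈ θ.eigenspace a := by
  rw [mem_eigenspace_iff, ← Module.End.mul_apply, mul_eigenAverage hθ ha, LinearMap.smul_apply]

theorem eigenAverage_apply_of_mem (hm : (m : K) ≠ 0) (ha : a ≠ 0) {v : V}
    (hv : v ∈ θ.eigenspace a) : θ.eigenAverage m a v = v := by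
  have hpow (r : ℕ) : (θ ^ r) v = a ^ r • v := by
    induction r with
    | zero => simp
    | succ r ih => rw [pow_succ', mul_apply, ih, map_smul, mem_eigenspace_iff.mp hv, smul_smul,
        pow_succ]
  simp [eigenAverage_apply, hpow, smul_smul, inv_mul_cancel₀ (pow_ne_zero _ ha),
    ← Nat.cast_smul_eq_nsmul K, hm]

theorem eigenAverage_apply_mem_of_forall_mem {W : Submodule K V} (hW : ∀ w ∈ W, θ w ∈ W)
    {v : V} (hv : v ∈ W) : θ.eigenAverage m a v ∈ W := by
  rw [eigenAverage_apply]
  exact W.smul_mem _ (W.sum_mem fun r _ ↦ W.smul_mem _ (pow_apply_mem_of_forall_mem r hW v hv))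

theorem eigenAverage_apply_of_twisted {F : End K V} {ζ : K} (hζ : ζ ≠ 0)
    (hF : ∀ v, θ (F v) = ζ • F (θ v)) (v : V) :
    θ.eigenAverage m (ζ * a) (F v) = F (θ.eigenAverage m a v) := by
  have hpow (r : ℕ) (w : V) : (θ ^ r) (F w) = ζ ^ r • F ((θ ^ r) w) := by
    induction r generalizing w with
    | zero => simp
    | succ r ih => rw [pow_succ', mul_apply, mul_apply, ih, map_smul, hF, smul_smul, ← pow_succ]
  simp [eigenAverage_apply, hpow, smul_smul, mul_pow, hζ]

end Average

section FiniteDimensional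

variable {K V : Type*} [Field K] [AddCommGroup V] [Module K V] [FiniteDimensional K V]

theorem eigenspace_mul_inf_eq_map_sup_ker_inf {θ F : End K V} {m : ℕ} (hm : (m : K) ≠ 0)
    (hθ : θ ^ m = 1) {ζ a : K} (hζ : ζ ^ m = 1) (ha : a ^ m = 1)
    (hF : ∀ v, θ (F v) = ζ • F (θ v)) (hFss : F.IsSemisimple) {W : Submodule K V}
    (hWθ : ∀ w ∈ W, θ w ∈ W) (hWF : ∀ w ∈ W, F w ∈ W) :
    θ.eigenspace (ζ * a) ⊓ W =
      (θ.eigenspace a ⊓ W).map F ⊔ LinearMap.ker F ⊓ (θ.eigenspace (ζ * a) ⊓ W) := by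
  have hm0 : m ≠ 0 := by rintro rfl; simp at hm
  have hζ0 : ζ ≠ 0 := ne_zero_pow hm0 (by simp [hζ])
  have hζa : (ζ * a) ^ m = 1 := by rw [mul_pow, hζ, ha, one_mul]
  have hζa0 : ζ * a ≠ 0 := ne_zero_pow hm0 (by simp [hζa])
  refine le_antisymm ?_ (sup_le ?_ inf_le_right)
  · rintro v ⟨hvθ, hvW⟩
    rw [← hFss.map_sup_ker_inf hWF] at hvW
    obtain ⟨_, ⟨u, hu, rfl⟩, z, ⟨hz, hzW⟩, rfl⟩ := Submodule.mem_sup.mp hvW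
    -- averaging `F u + z` onto the `ζ a`-eigenspace fixes it and moves `u` to the `a`-eigenspace
    have hvavg : F u + z = F (θ.eigenAverage m a u) + θ.eigenAverage m (ζ * a) z := by
      rw [← eigenAverage_apply_of_twisted hζ0 hF, ← map_add,
        eigenAverage_apply_of_mem hm hζa0 hvθ]
    rw [hvavg]
    refine Submodule.add_mem_sup (Submodule.mem_map_of_mem
      ⟨eigenAverage_apply_mem hθ ha u, eigenAverage_apply_mem_of_forall_mem hWθ hu⟩)
      ⟨?_, eigenAverage_apply_mem hθ hζa z, eigenAverage_apply_mem_of_forall_mem hWθ hzW⟩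
    rw [SetLike.mem_coe, LinearMap.mem_ker, ← eigenAverage_apply_of_twisted hζ0 hF,
      LinearMap.mem_ker.mp hz, map_zero]
  · rw [Submodule.map_le_iff_le_comap]
    rintro u ⟨huθ, huW⟩
    refine ⟨?_, hWF u huW⟩
    rw [SetLike.mem_coe, mem_eigenspace_iff, hF, mem_eigenspace_iff.mp huθ, map_smul,
      smul_smul]

theorem induction_on_eigenspace_intCast [CharZero K] (f : End K V) {P : ℤ → Prop}
    (hbot : ∀ k : ℤ, f.eigenspace k = ⊥ → P k) (hstep : ∀ k : ℤ, (∀ k' > k, P k') → P k)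
    (k : ℤ) : P k := by
  obtain ⟨N, hN⟩ := (f.finite_hasEigenvalue.preimage
    (Int.cast_injective (α := K)).injOn).bddAbove
  have hbelow (n : ℕ) : ∀ k, N - n < k → P k := by
    induction n with
    | zero =>
      intro k hk
      exact hbot k (not_not.mp fun hne ↦ (hN hne).not_gt (by simpa using hk))
    | succ n ih => exact fun k hk ↦ hstep k fun k' hk' ↦ ih k' (by push_cast at hk; omega)
  exact hbelow (N - k + 1).toNat k (by omega)


theorem inf_eigenspaceGE_le_of_forall_inf_eigenspace_le [CharZero K] {f : End K V}
    {p : Submodule K V}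
    (hp : ∀ v ∈ p, f v ∈ p) {Q : ℤ → Submodule K V} (hQ : Antitone Q)
    (hstep : ∀ j : ℤ, p ⊓ f.eigenspace j ≤ Q j ⊔ p ⊓ f.eigenspaceGE (j + 1)) (n : ℤ) :
    p ⊓ f.eigenspaceGE n ≤ Q n := by
  have hdecomp (n : ℤ) : p ⊓ f.eigenspaceGE n = ⨆ j : {j : ℤ // n ≤ j}, p ⊓ f.eigenspace j :=
    Submodule.inf_iSup_eigenspace hp _
  have hweight : ∀ j : ℤ, p ⊓ f.eigenspace j ≤ Q j := by
    refine f.induction_on_eigenspace_intCast (fun j hj ↦ by simp [hj]) fun j ih ↦ ?_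
    refine (hstep j).trans (sup_le le_rfl ?_)
    rw [hdecomp]
    exact iSup_le fun j' ↦ (ih j' (by have := j'.2; omega)).trans (hQ (by have := j'.2; omega))
  rw [hdecomp]
  exact iSup_le fun j ↦ (hweight j).trans (hQ j.2)

end FiniteDimensional

end Module.End

section LieWeights

variable {R L : Type*} [CommRing R] [LieRing L] [LieAlgebra R L]

theorem commute_ad_of_lie_eq_zero {x y : L} (h : ⁅x, y⁆ = 0) :
    Commute (ad R L x) (ad R L y) :=
  LinearMap.ext fun v ↦ by simp [leibniz_lie x y v, h]

theorem commute_ad_of_map_lie {θ : L →ₗ[R] L} (hθ : ∀ y z : L, θ ⁅y, z⁆ = ⁅θ y, θ z⁆) {e : L}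
    (he : θ e = e) : Commute θ (ad R L e) :=
  LinearMap.ext fun v ↦ by simp [hθ, he]

theorem lie_mem_eigenspace_mul_of_map_lie {θ : L →ₗ[R] L}
    (hθ : ∀ y z : L, θ ⁅y, z⁆ = ⁅θ y, θ z⁆) {y z : L} {a b : R}
    (hy : y ∈ eigenspace θ a) (hz : z ∈ eigenspace θ b) : ⁅y, z⁆ ∈ eigenspace θ (a * b) := by
  rw [mem_eigenspace_iff] at hy hz ⊢
  rw [hθ, hy, hz, smul_lie, lie_smul, smul_smul]

theorem lie_mem_eigenspace_ad_add {e y z : L} {a b : R} (hy : y ∈ (ad R L e).eigenspace a)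
    (hz : z ∈ (ad R L e).eigenspace b) : ⁅y, z⁆ ∈ (ad R L e).eigenspace (a + b) := by
  rw [mem_eigenspace_iff, ad_apply] at hy hz ⊢
  rw [leibniz_lie, hy, hz, smul_lie, lie_smul, add_smul]

theorem lie_mem_eigenspaceGE_ad_add {e y z : L} {a b : ℤ} (hy : y ∈ (ad R L e).eigenspaceGE a)
    (hz : z ∈ (ad R L e).eigenspaceGE b) : ⁅y, z⁆ ∈ (ad R L e).eigenspaceGE (a + b) := by
  induction hy using Submodule.iSup_induction' with
  | mem i y hy =>
    induction hz using Submodule.iSup_induction' with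
    | mem j z hz =>
      have := lie_mem_eigenspace_ad_add hy hz
      rw [← Int.cast_add] at this
      exact eigenspaceGE_antitone _ (add_le_add i.2 j.2) (eigenspace_le_eigenspaceGE _ _ this)
    | zero => simp
    | add z₁ z₂ _ _ h₁ h₂ => rw [lie_add]; exact add_mem h₁ h₂
  | zero => simp
  | add y₁ y₂ _ _ h₁ h₂ => rw [add_lie]; exact add_mem h₁ h₂

end LieWeights

section GradedLieAlgebra

variable {K g : Type*} [Field K] [LieRing g] [LieAlgebra K g]

theorem lie_mem_eigenspace_inf_ad_inf_ad {θ : g →ₗ[K] g}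
    (hbr : ∀ a b : g, θ ⁅a, b⁆ = ⁅θ a, θ b⁆) {e e' y z : g} {c c' a a' b b' : K}
    (hy : y ∈ eigenspace θ c ⊓ (ad K g e).eigenspace a ⊓ (ad K g e').eigenspace b)
    (hz : z ∈ eigenspace θ c' ⊓ (ad K g e).eigenspace a' ⊓ (ad K g e').eigenspace b') :
    ⁅y, z⁆ ∈ eigenspace θ (c * c') ⊓ (ad K g e).eigenspace (a + a') ⊓
      (ad K g e').eigenspace (b + b') :=
  ⟨⟨lie_mem_eigenspace_mul_of_map_lie hbr hy.1.1 hz.1.1, lie_mem_eigenspace_ad_add hy.1.2 hz.1.2⟩,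
    lie_mem_eigenspace_ad_add hy.2 hz.2⟩

theorem lie_mem_eigenspace_inf_eigenspaceGE {θ : g →ₗ[K] g}
    (hbr : ∀ a b : g, θ ⁅a, b⁆ = ⁅θ a, θ b⁆) {e y z : g} {c c' : K} {a b : ℤ}
    (hy : y ∈ eigenspace θ c ⊓ (ad K g e).eigenspaceGE a)
    (hz : z ∈ eigenspace θ c' ⊓ (ad K g e).eigenspaceGE b) :
    ⁅y, z⁆ ∈ eigenspace θ (c * c') ⊓ (ad K g e).eigenspaceGE (a + b) :=
  ⟨lie_mem_eigenspace_mul_of_map_lie hbr hy.1 hz.1, lie_mem_eigenspaceGE_ad_add hy.2 hz.2⟩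

variable [FiniteDimensional K g]

theorem eigenspace_inf_ad_inf_ad_eq_map_ad_sup_ker {θ : g →ₗ[K] g}
    {m : ℕ} {ζ : K} {el h xs : g} (hm : (m : K) ≠ 0) (hθ : θ ^ m = 1) (hζ : ζ ^ m = 1)
    (hbr : ∀ a b : g, θ ⁅a, b⁆ = ⁅θ a, θ b⁆) (hθel : θ el = el) (hθh : θ h = h)
    (hθxs : θ xs = ζ • xs) (hss : (ad K g xs).IsSemisimple) (hlamxs : ⁅el, xs⁆ = 0)
    (hhxs : ⁅h, xs⁆ = 0) (a b : K) :
    eigenspace θ ζ ⊓ (ad K g el).eigenspace a ⊓ (ad K g h).eigenspace b =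
      (eigenspace θ 1 ⊓ (ad K g el).eigenspace a ⊓ (ad K g h).eigenspace b).map (ad K g xs) ⊔
        LinearMap.ker (ad K g xs) ⊓
          (eigenspace θ ζ ⊓ (ad K g el).eigenspace a ⊓ (ad K g h).eigenspace b) := by
  have htwist (v : g) : θ (ad K g xs v) = ζ • ad K g xs (θ v) := by
    rw [ad_apply, ad_apply, hbr, hθxs, smul_lie]
  have := eigenspace_mul_inf_eq_map_sup_ker_inf hm hθ hζ (one_pow m) htwist hss
    (W := (ad K g el).eigenspace a ⊓ (ad K g h).eigenspace b)
    (fun w hw ↦ ⟨mapsTo_genEigenspace_of_comm (commute_ad_of_map_lie hbr hθel).symm a 1 hw.1,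
      mapsTo_genEigenspace_of_comm (commute_ad_of_map_lie hbr hθh).symm b 1 hw.2⟩)
    (fun w hw ↦ ⟨mapsTo_genEigenspace_of_comm (commute_ad_of_lie_eq_zero hlamxs) a 1 hw.1,
      mapsTo_genEigenspace_of_comm (commute_ad_of_lie_eq_zero hhxs) b 1 hw.2⟩)
  simpa only [mul_one, inf_assoc] using this

variable [CharZero K] {θ : g →ₗ[K] g} {ζ : K} {el h x xs xn0 xp : g}

theorem eigenspace_inf_ad_eigenspace_le_map_ad_sup_ker_sup
    (hbr : ∀ a b : g, θ ⁅a, b⁆ = ⁅θ a, θ b⁆) (hθh : θ h = h) (hlamh : ⁅el, h⁆ = 0)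
    (hdiag : ⨆ k : ℤ, (ad K g h).eigenspace k = ⊤)
    (hx : x = xs + xn0 + xp) (hxp : xp ∈ eigenspace θ ζ ⊓ (ad K g el).eigenspaceGE 1) (j : ℤ)
    (hsplit : ∀ k : ℤ,
      eigenspace θ ζ ⊓ (ad K g el).eigenspace j ⊓ (ad K g h).eigenspace k ≤
        (eigenspace θ 1 ⊓ (ad K g el).eigenspace j ⊓ (ad K g h).eigenspace k).map (ad K g xs) ⊔
          LinearMap.ker (ad K g xs) ⊓
            (eigenspace θ ζ ⊓ (ad K g el).eigenspace j ⊓ (ad K g h).eigenspace k))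
    (hraise : ∀ (k : ℤ) (y : g),
      y ∈ eigenspace θ 1 ⊓ (ad K g el).eigenspace j ⊓ (ad K g h).eigenspace k →
      ⁅xn0, y⁆ ∈ eigenspace θ ζ ⊓ (ad K g el).eigenspace j ⊓
        (ad K g h).eigenspace ((k + 2 : ℤ) : K)) :
    eigenspace θ ζ ⊓ (ad K g el).eigenspace j ≤
      (eigenspace θ 1 ⊓ (ad K g el).eigenspaceGE j).map (ad K g x) ⊔
        LinearMap.ker (ad K g xs) ⊓ eigenspace θ ζ ⊓ (ad K g el).eigenspaceGE j ⊔
        eigenspace θ ζ ⊓ (ad K g el).eigenspaceGE (j + 1) := by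
  set T := (eigenspace θ 1 ⊓ (ad K g el).eigenspaceGE j).map (ad K g x) ⊔
    LinearMap.ker (ad K g xs) ⊓ eigenspace θ ζ ⊓ (ad K g el).eigenspaceGE j ⊔
    eigenspace θ ζ ⊓ (ad K g el).eigenspaceGE (j + 1)
  -- downward induction on the `h`-weight, which `xn0` raises by two
  have hweight : ∀ k : ℤ, eigenspace θ ζ ⊓ (ad K g el).eigenspace j ⊓
      (ad K g h).eigenspace k ≤ T := by
    refine (ad K g h).induction_on_eigenspace_intCast (fun k hk ↦ by simp [hk]) fun k ih ↦ ?_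
    intro v hv
    obtain ⟨_, ⟨u, hu, rfl⟩, z, hz, rfl⟩ := Submodule.mem_sup.mp (hsplit k hv)
    have hxsu : ad K g xs u = ⁅x, u⁆ - ⁅xn0, u⁆ - ⁅xp, u⁆ := by
      rw [ad_apply, hx, add_lie, add_lie]; abel
    have hu' : u ∈ eigenspace θ 1 ⊓ (ad K g el).eigenspaceGE j :=
      ⟨hu.1.1, eigenspace_le_eigenspaceGE _ _ hu.1.2⟩
    have hxpu : ⁅xp, u⁆ ∈ eigenspace θ ζ ⊓ (ad K g el).eigenspaceGE (j + 1) := by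
      simpa [add_comm] using lie_mem_eigenspace_inf_eigenspaceGE hbr hxp hu'
    rw [hxsu]
    refine T.add_mem (T.sub_mem (T.sub_mem ?_ (ih (k + 2) (by omega) (hraise k u hu)))
      (Submodule.mem_sup_right hxpu)) ?_
    · exact Submodule.mem_sup_left (Submodule.mem_sup_left (Submodule.mem_map_of_mem hu'))
    · exact Submodule.mem_sup_left (Submodule.mem_sup_right
        ⟨⟨hz.1, hz.2.1.1⟩, eigenspace_le_eigenspaceGE _ _ hz.2.1.2⟩)
  have hinv : ∀ v ∈ eigenspace θ ζ ⊓ (ad K g el).eigenspace j,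
      ad K g h v ∈ eigenspace θ ζ ⊓ (ad K g el).eigenspace j := fun v hv ↦
    ⟨mapsTo_genEigenspace_of_comm (commute_ad_of_map_lie hbr hθh) ζ 1 hv.1,
      mapsTo_genEigenspace_of_comm (commute_ad_of_lie_eq_zero hlamh) (j : K) 1 hv.2⟩
  calc eigenspace θ ζ ⊓ (ad K g el).eigenspace j
      = eigenspace θ ζ ⊓ (ad K g el).eigenspace j ⊓ ⨆ k : ℤ, (ad K g h).eigenspace k := by
        rw [hdiag, inf_top_eq]
    _ = ⨆ k : ℤ, eigenspace θ ζ ⊓ (ad K g el).eigenspace j ⊓ (ad K g h).eigenspace k :=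
        Submodule.inf_iSup_eigenspace hinv _
    _ ≤ T := iSup_le hweight

theorem eigenspace_inf_eigenspaceGE_eq_map_ad_sup_ker (hbr : ∀ a b : g, θ ⁅a, b⁆ = ⁅θ a, θ b⁆)
    (hθel : θ el = el) (hθh : θ h = h) (hlamh : ⁅el, h⁆ = 0)
    (hdiag : ⨆ k : ℤ, (ad K g h).eigenspace k = ⊤) (hx : x = xs + xn0 + xp)
    (hxs : xs ∈ eigenspace θ ζ ⊓ (ad K g el).eigenspace 0)
    (hxn0 : xn0 ∈ eigenspace θ ζ ⊓ (ad K g el).eigenspace 0)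
    (hxp : xp ∈ eigenspace θ ζ ⊓ (ad K g el).eigenspaceGE 1)
    (hsplit : ∀ j k : ℤ,
      eigenspace θ ζ ⊓ (ad K g el).eigenspace j ⊓ (ad K g h).eigenspace k ≤
        (eigenspace θ 1 ⊓ (ad K g el).eigenspace j ⊓ (ad K g h).eigenspace k).map (ad K g xs) ⊔
          LinearMap.ker (ad K g xs) ⊓
            (eigenspace θ ζ ⊓ (ad K g el).eigenspace j ⊓ (ad K g h).eigenspace k))
    (hraise : ∀ (j k : ℤ) (y : g),
      y ∈ eigenspace θ 1 ⊓ (ad K g el).eigenspace j ⊓ (ad K g h).eigenspace k →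
      ⁅xn0, y⁆ ∈ eigenspace θ ζ ⊓ (ad K g el).eigenspace j ⊓
        (ad K g h).eigenspace ((k + 2 : ℤ) : K)) (n : ℤ) :
    eigenspace θ ζ ⊓ (ad K g el).eigenspaceGE n =
      (eigenspace θ 1 ⊓ (ad K g el).eigenspaceGE n).map (ad K g x) ⊔
        LinearMap.ker (ad K g xs) ⊓ eigenspace θ ζ ⊓ (ad K g el).eigenspaceGE n := by
  have hQ : Antitone fun n : ℤ ↦ (eigenspace θ 1 ⊓ (ad K g el).eigenspaceGE n).map (ad K g x) ⊔
      LinearMap.ker (ad K g xs) ⊓ eigenspace θ ζ ⊓ (ad K g el).eigenspaceGE n := fun a b hab ↦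
    sup_le_sup (Submodule.map_mono (inf_le_inf_left _ (eigenspaceGE_antitone _ hab)))
      (inf_le_inf_left _ (eigenspaceGE_antitone _ hab))
  refine le_antisymm (inf_eigenspaceGE_le_of_forall_inf_eigenspace_le
    (mapsTo_genEigenspace_of_comm (commute_ad_of_map_lie hbr hθel) ζ 1) hQ
    (fun j ↦ eigenspace_inf_ad_eigenspace_le_map_ad_sup_ker_sup hbr hθh hlamh hdiag hx hxp j
      (hsplit j) (hraise j)) n) (sup_le ?_ (inf_le_inf_right _ inf_le_right))
  have hweight0 : (ad K g el).eigenspace 0 ≤ (ad K g el).eigenspaceGE 0 := by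
    simpa using eigenspace_le_eigenspaceGE (ad K g el) 0
  have hxGE : x ∈ eigenspace θ ζ ⊓ (ad K g el).eigenspaceGE 0 := by
    rw [hx]
    exact add_mem (add_mem ⟨hxs.1, hweight0 hxs.2⟩ ⟨hxn0.1, hweight0 hxn0.2⟩)
      ⟨hxp.1, eigenspaceGE_antitone _ zero_le_one hxp.2⟩
  refine Submodule.map_le_iff_le_comap.mpr fun u hu ↦ ?_
  simpa using lie_mem_eigenspace_inf_eigenspaceGE hbr hxGE hu

end GradedLieAlgebra

theorem stmt12_general {g : Type*} [LieRing g] [LieAlgebra ℂ g] [FiniteDimensional ℂ g]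
    (m : ℕ) (hm : 0 < m) (θ : g →ₗ[ℂ] g)
    (hbr : ∀ a b : g, θ ⁅a, b⁆ = ⁅θ a, θ b⁆)
    (hθ : θ ^ m = 1) (ζ : ℂ) (hζ : IsPrimitiveRoot ζ m)
    (el h x xs xn xn0 : g)
    (hel0 : el ∈ Module.End.eigenspace θ 1)
    (hh0 : h ∈ Module.End.eigenspace θ 1)
    (hdiagμ : (⨆ k : ℤ, Module.End.eigenspace (LieAlgebra.ad ℂ g h) (k : ℂ)) = ⊤)
    (hx : x = xs + xn)
    (hxs1 : xs ∈ Module.End.eigenspace θ ζ)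
    (hxn1 : xn ∈ Module.End.eigenspace θ ζ)
    (hss : (LieAlgebra.ad ℂ g xs).IsSemisimple)
    (hlamxs : ⁅el, xs⁆ = 0)
    (hxn0w : xn0 ∈ Module.End.eigenspace (LieAlgebra.ad ℂ g el) (0 : ℂ))
    (hxn0g1 : xn0 ∈ Module.End.eigenspace θ ζ)
    (hxnpos : xn - xn0 ∈
      ⨆ j : {j : ℤ // 0 < j}, Module.End.eigenspace (LieAlgebra.ad ℂ g el) (j.1 : ℂ))
    (hsl2a : ⁅h, xn0⁆ = (2 : ℂ) • xn0)
    (hhxs : ⁅h, xs⁆ = 0)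
    (hlamh : ⁅el, h⁆ = 0) :
    -- (1) `[x_s, ^μ_k ^λ_j g_0] ⊆ ^μ_k ^λ_j g_1`
    (∀ (j k : ℤ) (y : g),
      y ∈ Module.End.eigenspace θ 1 ⊓
            Module.End.eigenspace (LieAlgebra.ad ℂ g el) (j : ℂ) ⊓
            Module.End.eigenspace (LieAlgebra.ad ℂ g h) (k : ℂ) →
      ⁅xs, y⁆ ∈ Module.End.eigenspace θ ζ ⊓
            Module.End.eigenspace (LieAlgebra.ad ℂ g el) (j : ℂ) ⊓
            Module.End.eigenspace (LieAlgebra.ad ℂ g h) (k : ℂ)) ∧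
    -- (2) `[x_n^0, ^μ_k ^λ_j g_0] ⊆ ^μ_{k+2} ^λ_j g_1`
    (∀ (j k : ℤ) (y : g),
      y ∈ Module.End.eigenspace θ 1 ⊓
            Module.End.eigenspace (LieAlgebra.ad ℂ g el) (j : ℂ) ⊓
            Module.End.eigenspace (LieAlgebra.ad ℂ g h) (k : ℂ) →
      ⁅xn0, y⁆ ∈ Module.End.eigenspace θ ζ ⊓
            Module.End.eigenspace (LieAlgebra.ad ℂ g el) (j : ℂ) ⊓
            Module.End.eigenspace (LieAlgebra.ad ℂ g h) ((k + 2 : ℤ) : ℂ)) ∧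
    -- (3) `^μ_k ^λ_j g_1 = [x_s, ^μ_k ^λ_j g_0] ⊕ ^μ_k ^λ_j Z_{g_1}(x_s)`
    (∀ j k : ℤ,
      (Module.End.eigenspace θ ζ ⊓
          Module.End.eigenspace (LieAlgebra.ad ℂ g el) (j : ℂ) ⊓
          Module.End.eigenspace (LieAlgebra.ad ℂ g h) (k : ℂ) =
        Submodule.map (LieAlgebra.ad ℂ g xs)
            (Module.End.eigenspace θ 1 ⊓
              Module.End.eigenspace (LieAlgebra.ad ℂ g el) (j : ℂ) ⊓
              Module.End.eigenspace (LieAlgebra.ad ℂ g h) (k : ℂ)) ⊔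
          (LinearMap.ker (LieAlgebra.ad ℂ g xs) ⊓
            (Module.End.eigenspace θ ζ ⊓
              Module.End.eigenspace (LieAlgebra.ad ℂ g el) (j : ℂ) ⊓
              Module.End.eigenspace (LieAlgebra.ad ℂ g h) (k : ℂ)))) ∧
      Submodule.map (LieAlgebra.ad ℂ g xs)
          (Module.End.eigenspace θ 1 ⊓
            Module.End.eigenspace (LieAlgebra.ad ℂ g el) (j : ℂ) ⊓
            Module.End.eigenspace (LieAlgebra.ad ℂ g h) (k : ℂ)) ⊓
        (LinearMap.ker (LieAlgebra.ad ℂ g xs) ⊓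
          (Module.End.eigenspace θ ζ ⊓
            Module.End.eigenspace (LieAlgebra.ad ℂ g el) (j : ℂ) ⊓
            Module.End.eigenspace (LieAlgebra.ad ℂ g h) (k : ℂ))) = ⊥) ∧
    -- (4) `^λ_{≥n} g_1 = [x, ^λ_{≥n} g_0] + ^λ_{≥n} Z_{g_1}(x_s)`
    (∀ n : ℤ,
      Module.End.eigenspace θ ζ ⊓
          (⨆ j : {j : ℤ // n ≤ j},
            Module.End.eigenspace (LieAlgebra.ad ℂ g el) (j.1 : ℂ)) =
        Submodule.map (LieAlgebra.ad ℂ g x)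
            (Module.End.eigenspace θ 1 ⊓
              (⨆ j : {j : ℤ // n ≤ j},
                Module.End.eigenspace (LieAlgebra.ad ℂ g el) (j.1 : ℂ))) ⊔
          (LinearMap.ker (LieAlgebra.ad ℂ g xs) ⊓
            Module.End.eigenspace θ ζ ⊓
            (⨆ j : {j : ℤ // n ≤ j},
              Module.End.eigenspace (LieAlgebra.ad ℂ g el) (j.1 : ℂ)))) := by
  have hθel : θ el = el := by simpa using mem_eigenspace_iff.mp hel0
  have hθh : θ h = h := by simpa using mem_eigenspace_iff.mp hh0
  have hxs : xs ∈ eigenspace θ ζ ⊓ (ad ℂ g el).eigenspace 0 ⊓ (ad ℂ g h).eigenspace 0 :=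
    ⟨⟨hxs1, by simp [hlamxs]⟩, by simp [hhxs]⟩
  have hxn0 : xn0 ∈ eigenspace θ ζ ⊓ (ad ℂ g el).eigenspace 0 ⊓ (ad ℂ g h).eigenspace 2 :=
    ⟨⟨hxn0g1, hxn0w⟩, by simp [hsl2a]⟩
  -- `0 < j` unfolds to `0 + 1 ≤ j`, so `hxnpos` is literally membership in `eigenspaceGE 1`
  have hxp : xn - xn0 ∈ eigenspace θ ζ ⊓ (ad ℂ g el).eigenspaceGE 1 :=
    ⟨sub_mem hxn1 hxn0g1, hxnpos⟩
  have hsplit := eigenspace_inf_ad_inf_ad_eq_map_ad_sup_ker (Nat.cast_ne_zero.mpr hm.ne') hθ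
    hζ.pow_eq_one hbr hθel hθh (mem_eigenspace_iff.mp hxs1) hss hlamxs hhxs
  have hraise (j k : ℤ) (y : g) (hy : y ∈ eigenspace θ 1 ⊓ (ad ℂ g el).eigenspace (j : ℂ) ⊓
      (ad ℂ g h).eigenspace (k : ℂ)) : ⁅xn0, y⁆ ∈ eigenspace θ ζ ⊓
        (ad ℂ g el).eigenspace (j : ℂ) ⊓ (ad ℂ g h).eigenspace ((k + 2 : ℤ) : ℂ) := by
    simpa [add_comm] using lie_mem_eigenspace_inf_ad_inf_ad hbr hxn0 hy
  refine ⟨fun j k y hy ↦ by simpa using lie_mem_eigenspace_inf_ad_inf_ad hbr hxs hy, hraise,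
    fun j k ↦ ⟨hsplit j k, ?_⟩, fun n ↦ ?_⟩
  · exact (hss.isCompl_range_ker.disjoint.mono LinearMap.map_le_range inf_le_left).eq_bot
  · exact eigenspace_inf_eigenspaceGE_eq_map_ad_sup_ker hbr hθel hθh hlamh hdiagμ
      (by rw [hx]; abel) hxs.1 hxn0.1 hxp (fun j k ↦ (hsplit j k).le) hraise n

/-- Weight-space relations for the proof of `Lemma (lem:Ux)`.  Let `g` be a graded complex
Lie algebra (grading by eigenspaces of the finite-order automorphism `θ`), and let
`x = x_s + x_n ∈ g_1` be a Jordan decomposition.  Let `el ∈ g_0` be the grading element of a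
cocharacter `λ` centralising `x_s` (weight spaces `^λ_j g = eigenspace (ad el) j`), let
`x_n^0` be the `λ`-weight-zero component of `x_n`, and let `(x_n^0, h, f)` be an
`sl₂`-triple with `h ∈ Z_{g_0}(x_s)`, `h, f` of `λ`-weight `0`, and `f ∈ g_{-1}`.  Let `μ`
be the cocharacter with `dμ(1) = h` (weight spaces `^μ_k g = eigenspace (ad h) k`).  Then for
all integers `j, k`:
`[x_s, ^μ_k ^λ_j g_0] ⊆ ^μ_k ^λ_j g_1`, `[x_n^0, ^μ_k ^λ_j g_0] ⊆ ^μ_{k+2} ^λ_j g_1`,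
and, since `ad x_s` is semisimple,
`^μ_k ^λ_j g_1 = [x_s, ^μ_k ^λ_j g_0] ⊕ ^μ_k ^λ_j Z_{g_1}(x_s)`.
Consequently, for every `n ∈ ℤ`,
`^λ_{≥n} g_1 = [x, ^λ_{≥n} g_0] + ^λ_{≥n} Z_{g_1}(x_s)`. -/
theorem stmt12 {g : Type*} [LieRing g] [LieAlgebra ℂ g] [FiniteDimensional ℂ g]
    (m : ℕ) (hm : 0 < m) (θ : g →ₗ[ℂ] g)
    (hbr : ∀ a b : g, θ ⁅a, b⁆ = ⁅θ a, θ b⁆)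
    (hθ : θ ^ m = 1) (ζ : ℂ) (hζ : IsPrimitiveRoot ζ m)
    (el h f x xs xn xn0 : g)
    (hel0 : el ∈ Module.End.eigenspace θ 1)
    (hh0 : h ∈ Module.End.eigenspace θ 1)
    (hf1 : f ∈ Module.End.eigenspace θ ζ⁻¹)
    (hdiagLam : (⨆ j : ℤ, Module.End.eigenspace (LieAlgebra.ad ℂ g el) (j : ℂ)) = ⊤)
    (hdiagμ : (⨆ k : ℤ, Module.End.eigenspace (LieAlgebra.ad ℂ g h) (k : ℂ)) = ⊤)
    (hx : x = xs + xn)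
    (hxs1 : xs ∈ Module.End.eigenspace θ ζ)
    (hxn1 : xn ∈ Module.End.eigenspace θ ζ)
    (hss : (LieAlgebra.ad ℂ g xs).IsSemisimple)
    (hnil : IsNilpotent (LieAlgebra.ad ℂ g xn))
    (hcomm : ⁅xs, xn⁆ = 0)
    (hlamxs : ⁅el, xs⁆ = 0)
    (hxn0w : xn0 ∈ Module.End.eigenspace (LieAlgebra.ad ℂ g el) (0 : ℂ))
    (hxn0g1 : xn0 ∈ Module.End.eigenspace θ ζ)
    (hxnpos : xn - xn0 ∈
      ⨆ j : {j : ℤ // 0 < j}, Module.End.eigenspace (LieAlgebra.ad ℂ g el) (j.1 : ℂ))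
    (hsl2a : ⁅h, xn0⁆ = (2 : ℂ) • xn0)
    (hsl2b : ⁅h, f⁆ = (-2 : ℂ) • f)
    (hsl2c : ⁅xn0, f⁆ = h)
    (hhxs : ⁅h, xs⁆ = 0) (hfxs : ⁅f, xs⁆ = 0)
    (hlamh : ⁅el, h⁆ = 0) (hlamf : ⁅el, f⁆ = 0) :
    -- (1) `[x_s, ^μ_k ^λ_j g_0] ⊆ ^μ_k ^λ_j g_1`
    (∀ (j k : ℤ) (y : g),
      y ∈ Module.End.eigenspace θ 1 ⊓
            Module.End.eigenspace (LieAlgebra.ad ℂ g el) (j : ℂ) ⊓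
            Module.End.eigenspace (LieAlgebra.ad ℂ g h) (k : ℂ) →
      ⁅xs, y⁆ ∈ Module.End.eigenspace θ ζ ⊓
            Module.End.eigenspace (LieAlgebra.ad ℂ g el) (j : ℂ) ⊓
            Module.End.eigenspace (LieAlgebra.ad ℂ g h) (k : ℂ)) ∧
    -- (2) `[x_n^0, ^μ_k ^λ_j g_0] ⊆ ^μ_{k+2} ^λ_j g_1`
    (∀ (j k : ℤ) (y : g),
      y ∈ Module.End.eigenspace θ 1 ⊓
            Module.End.eigenspace (LieAlgebra.ad ℂ g el) (j : ℂ) ⊓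
            Module.End.eigenspace (LieAlgebra.ad ℂ g h) (k : ℂ) →
      ⁅xn0, y⁆ ∈ Module.End.eigenspace θ ζ ⊓
            Module.End.eigenspace (LieAlgebra.ad ℂ g el) (j : ℂ) ⊓
            Module.End.eigenspace (LieAlgebra.ad ℂ g h) ((k + 2 : ℤ) : ℂ)) ∧
    -- (3) `^μ_k ^λ_j g_1 = [x_s, ^μ_k ^λ_j g_0] ⊕ ^μ_k ^λ_j Z_{g_1}(x_s)`
    (∀ j k : ℤ,
      (Module.End.eigenspace θ ζ ⊓
          Module.End.eigenspace (LieAlgebra.ad ℂ g el) (j : ℂ) ⊓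
          Module.End.eigenspace (LieAlgebra.ad ℂ g h) (k : ℂ) =
        Submodule.map (LieAlgebra.ad ℂ g xs)
            (Module.End.eigenspace θ 1 ⊓
              Module.End.eigenspace (LieAlgebra.ad ℂ g el) (j : ℂ) ⊓
              Module.End.eigenspace (LieAlgebra.ad ℂ g h) (k : ℂ)) ⊔
          (LinearMap.ker (LieAlgebra.ad ℂ g xs) ⊓
            (Module.End.eigenspace θ ζ ⊓
              Module.End.eigenspace (LieAlgebra.ad ℂ g el) (j : ℂ) ⊓
              Module.End.eigenspace (LieAlgebra.ad ℂ g h) (k : ℂ)))) ∧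
      Submodule.map (LieAlgebra.ad ℂ g xs)
          (Module.End.eigenspace θ 1 ⊓
            Module.End.eigenspace (LieAlgebra.ad ℂ g el) (j : ℂ) ⊓
            Module.End.eigenspace (LieAlgebra.ad ℂ g h) (k : ℂ)) ⊓
        (LinearMap.ker (LieAlgebra.ad ℂ g xs) ⊓
          (Module.End.eigenspace θ ζ ⊓
            Module.End.eigenspace (LieAlgebra.ad ℂ g el) (j : ℂ) ⊓
            Module.End.eigenspace (LieAlgebra.ad ℂ g h) (k : ℂ))) = ⊥) ∧
    -- (4) `^λ_{≥n} g_1 = [x, ^λ_{≥n} g_0] + ^λ_{≥n} Z_{g_1}(x_s)`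
    (∀ n : ℤ,
      Module.End.eigenspace θ ζ ⊓
          (⨆ j : {j : ℤ // n ≤ j},
            Module.End.eigenspace (LieAlgebra.ad ℂ g el) (j.1 : ℂ)) =
        Submodule.map (LieAlgebra.ad ℂ g x)
            (Module.End.eigenspace θ 1 ⊓
              (⨆ j : {j : ℤ // n ≤ j},
                Module.End.eigenspace (LieAlgebra.ad ℂ g el) (j.1 : ℂ))) ⊔
          (LinearMap.ker (LieAlgebra.ad ℂ g xs) ⊓
            Module.End.eigenspace θ ζ ⊓
            (⨆ j : {j : ℤ // n ≤ j},
              Module.End.eigenspace (LieAlgebra.ad ℂ g el) (j.1 : ℂ)))) :=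
  stmt12_general m hm θ hbr hθ ζ hζ el h x xs xn xn0 hel0 hh0 hdiagμ hx hxs1 hxn1 hss hlamxs hxn0w
    hxn0g1 hxnpos hsl2a hhxs hlamh
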